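/- arXiv:0904.2875 — 8 statements merged into one kernel-verified Lean document; each statement's English description precedes it below -/
import Mathlib

section
/- Let X be a nonempty compact Hausdorff space and let σ_1, …, σ_n : X → X (n ≥ 1) be continuous maps such that X = σ_1(X) ∪ ⋯ ∪ σ_n(X). Then the multivariable projective limit ̃X = { (i, x) ∈ {1,…,n}^ℕ × X^ℕ : σ_{i(s)}(x(s+1)) = x(s) for all s ∈ ℕ } is a nonempty compact space. -/
/-- The multivariable projective limit of the system `(X, σ₁, …, σₙ)`. -/
abbrev MultiProjLim {X : Type*} [TopologicalSpace X] (n : ℕ) (σ : Fin n → X → X) : Type _ :=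
  {z : (ℕ → Fin n) × (ℕ → X) // ∀ s, σ (z.1 s) (z.2 (s + 1)) = z.2 s}

/-- For a surjective multivariable system on a nonempty compact Hausdorff space,
the multivariable projective limit is nonempty and compact. -/
theorem multiProjLim_nonempty_compact {X : Type*} [TopologicalSpace X] [CompactSpace X]
    [T2Space X] [Nonempty X] (n : ℕ) (hn : 1 ≤ n) (σ : Fin n → X → X)
    (hσ : ∀ i, Continuous (σ i)) (hcover : (⋃ i, Set.range (σ i)) = Set.univ) :
    Nonempty (MultiProjLim n σ) ∧ CompactSpace (MultiProjLim n σ) := by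
  classical
  constructor
  · have h : ∀ x : X, ∃ i y, σ i y = x := by
      intro x
      have hx : x ∈ ⋃ i, Set.range (σ i) := hcover ▸ Set.mem_univ x
      simpa [Set.mem_iUnion] using hx
    choose I Y hIY using h
    obtain ⟨x₀⟩ := ‹Nonempty X›
    refine ⟨⟨(fun s => I (Y^[s] x₀), fun s => Y^[s] x₀), ?_⟩⟩
    intro s
    simp only [Function.iterate_succ_apply']
    exact hIY (Y^[s] x₀)
  · have hcl : IsClosed {z : (ℕ → Fin n) × (ℕ → X) | ∀ s, σ (z.1 s) (z.2 (s + 1)) = z.2 s} := by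
      have heq : {z : (ℕ → Fin n) × (ℕ → X) | ∀ s, σ (z.1 s) (z.2 (s + 1)) = z.2 s}
          = ⋂ s, ⋃ i, {z : (ℕ → Fin n) × (ℕ → X) | z.1 s = i}
              ∩ {z | σ i (z.2 (s + 1)) = z.2 s} := by
        ext z
        simp only [Set.mem_setOf_eq, Set.mem_iInter, Set.mem_iUnion, Set.mem_inter_iff]
        constructor
        · intro h s; exact ⟨z.1 s, rfl, h s⟩
        · intro h s; obtain ⟨i, hi, h2⟩ := h s; rw [hi]; exact h2
      rw [heq]
      refine isClosed_iInter fun s => isClosed_iUnion_of_finite fun i => IsClosed.inter ?_ ?_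
      · exact isClosed_eq ((continuous_apply s).comp continuous_fst) continuous_const
      · exact isClosed_eq ((hσ i).comp ((continuous_apply (s + 1)).comp continuous_snd))
          ((continuous_apply s).comp continuous_snd)
    exact isCompact_iff_compactSpace.mp hcl.isCompact
end

section
/- Let X be a locally compact Hausdorff space and let σ_1, …, σ_n : X → X (n ≥ 1) be continuous maps. For 1 ≤ j ≤ n define ̃σ_j : ̃X → ̃X by ̃σ_j(i, x) = ((j, i(0), i(1), …), (σ_j(x(0)), x(0), x(1), …)), and set ̃X_j = { (i, x) ∈ ̃X : i(0) = j }. Then the sets ̃X_1, …, ̃X_n are pairwise disjoint clopen subsets of ̃X whose union is ̃X, the map ̃σ_j takes values in ̃X_j, and ̃σ_j is a homeomorphism of ̃X onto ̃X_j. -/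
/-- The sets `X̃ⱼ = {(i, x) ∈ X̃ : i 0 = j}` are pairwise disjoint clopen sets covering `X̃`,
`σ̃ⱼ` takes values in `X̃ⱼ`, and `σ̃ⱼ` is a homeomorphism of `X̃` onto `X̃ⱼ`. -/
theorem multiProjLim_lifted_maps_homeomorphisms {X : Type*} [TopologicalSpace X]
    [LocallyCompactSpace X] [T2Space X] (n : ℕ) (hn : 1 ≤ n) (σ : Fin n → X → X)
    (hσ : ∀ i, Continuous (σ i))
    (tσ : Fin n → MultiProjLim n σ → MultiProjLim n σ)
    (htσ : ∀ j z, (tσ j z).1.1 0 = j ∧ (∀ s, (tσ j z).1.1 (s + 1) = z.1.1 s) ∧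
      (tσ j z).1.2 0 = σ j (z.1.2 0) ∧ (∀ s, (tσ j z).1.2 (s + 1) = z.1.2 s)) :
    (∀ j k : Fin n, j ≠ k →
        Disjoint {z : MultiProjLim n σ | z.1.1 0 = j} {z : MultiProjLim n σ | z.1.1 0 = k}) ∧
    (∀ j : Fin n, IsClopen {z : MultiProjLim n σ | z.1.1 0 = j}) ∧
    (⋃ j : Fin n, {z : MultiProjLim n σ | z.1.1 0 = j}) = Set.univ ∧
    (∀ (j : Fin n) (z : MultiProjLim n σ), (tσ j z).1.1 0 = j) ∧
    (∀ j : Fin n, ∃ e : MultiProjLim n σ ≃ₜ {z : MultiProjLim n σ // z.1.1 0 = j},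
      ∀ z, (e z : MultiProjLim n σ) = tσ j z) := by
  have hc0 : Continuous fun z : MultiProjLim n σ => z.1.1 0 :=
    (continuous_apply 0).comp (continuous_fst.comp continuous_subtype_val)
  refine ⟨?_, ?_, ?_, fun j z => (htσ j z).1, ?_⟩
  · intro j k hjk
    rw [Set.disjoint_left]
    intro z hz hk
    exact hjk (hz.symm.trans hk)
  · intro j
    exact (isClopen_discrete {j}).preimage hc0
  · ext z
    simp only [Set.mem_iUnion, Set.mem_setOf_eq, Set.mem_univ, iff_true]
    exact ⟨z.1.1 0, rfl⟩
  · intro j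
    -- the backward map: shift
    have bwd_prop : ∀ w : {z : MultiProjLim n σ // z.1.1 0 = j},
        ∀ s, σ (w.1.1.1 (s + 1)) (w.1.1.2 (s + 1 + 1)) = w.1.1.2 (s + 1) :=
      fun w s => w.1.2 (s + 1)
    set bwd : {z : MultiProjLim n σ // z.1.1 0 = j} → MultiProjLim n σ :=
      fun w => ⟨⟨fun s => w.1.1.1 (s + 1), fun s => w.1.1.2 (s + 1)⟩, bwd_prop w⟩ with hbwd
    have hcont : Continuous (tσ j) := by
      rw [continuous_induced_rng]
      have h1 : (Subtype.val ∘ tσ j) =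
          fun z : MultiProjLim n σ =>
            ((fun s => Nat.casesOn s j (fun s => z.1.1 s) : ℕ → Fin n),
             (fun s => Nat.casesOn s (σ j (z.1.2 0)) (fun s => z.1.2 s) : ℕ → X)) := by
        funext z
        obtain ⟨h0, h1, h2, h3⟩ := htσ j z
        refine Prod.ext ?_ ?_ <;> funext s <;> cases s
        · exact h0
        · exact h1 _
        · exact h2
        · exact h3 _
      rw [h1]
      refine Continuous.prodMk (continuous_pi fun s => ?_) (continuous_pi fun s => ?_)
      · cases s with
        | zero => exact continuous_const
        | succ s => exact (continuous_apply s).comp (continuous_fst.comp continuous_subtype_val)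
      · cases s with
        | zero =>
          exact (hσ j).comp ((continuous_apply 0).comp
            (continuous_snd.comp continuous_subtype_val))
        | succ s => exact (continuous_apply s).comp (continuous_snd.comp continuous_subtype_val)
    have hbcont : Continuous bwd := by
      rw [hbwd, continuous_induced_rng]
      refine Continuous.prodMk (continuous_pi fun s => ?_) (continuous_pi fun s => ?_)
      · exact (continuous_apply (s + 1)).comp
          (continuous_fst.comp (continuous_subtype_val.comp continuous_subtype_val))
      · exact (continuous_apply (s + 1)).comp
          (continuous_snd.comp (continuous_subtype_val.comp continuous_subtype_val))
    refine ⟨⟨⟨fun z => ⟨tσ j z, (htσ j z).1⟩, bwd, ?_, ?_⟩, hcont.subtype_mk _, hbcont⟩,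
      fun z => rfl⟩
    · intro z
      obtain ⟨h0, h1, h2, h3⟩ := htσ j z
      refine Subtype.ext (Prod.ext (funext fun s => ?_) (funext fun s => ?_))
      · exact h1 s
      · exact h3 s
    · intro w
      obtain ⟨h0, h1, h2, h3⟩ := htσ j (bwd w)
      refine Subtype.ext (Subtype.ext (Prod.ext (funext fun s => ?_) (funext fun s => ?_)))
      · cases s with
        | zero => exact h0.trans w.2.symm
        | succ s => exact h1 s
      · cases s with
        | zero =>
          refine h2.trans ?_
          have := w.1.2 0
          rw [w.2] at this
          exact this
        | succ s => exact h3 s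
end

section
/- Let X be a locally compact Hausdorff space and let σ_1, …, σ_n : X → X (n ≥ 1) be continuous maps. Define τ : ̃X → ̃X by τ(i, x) = (s ↦ i(s+1), s ↦ x(s+1)) (the backward shift on both coordinates). Then τ ∘ ̃σ_j is the identity on ̃X for every j, ̃σ_j(τ(z)) = z for every z ∈ ̃X_j, and τ is a local homeomorphism of ̃X. -/
lemma multiProjLim_ext {X : Type*} [TopologicalSpace X] {n : ℕ} {σ : Fin n → X → X}
    {a b : MultiProjLim n σ} (h1 : ∀ s, a.1.1 s = b.1.1 s) (h2 : ∀ s, a.1.2 s = b.1.2 s) :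
    a = b := by
  apply Subtype.ext
  exact Prod.ext (funext h1) (funext h2)

/-- The backward shift `τ` on the multivariable projective limit is a left inverse of every
`σ̃ⱼ`, a right inverse of `σ̃ⱼ` on `X̃ⱼ`, and a local homeomorphism. -/
theorem multiProjLim_backward_shift_localHomeomorph {X : Type*} [TopologicalSpace X]
    [LocallyCompactSpace X] [T2Space X] (n : ℕ) (hn : 1 ≤ n) (σ : Fin n → X → X)
    (hσ : ∀ i, Continuous (σ i))
    (tσ : Fin n → MultiProjLim n σ → MultiProjLim n σ)
    (htσ : ∀ j z, (tσ j z).1.1 0 = j ∧ (∀ s, (tσ j z).1.1 (s + 1) = z.1.1 s) ∧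
      (tσ j z).1.2 0 = σ j (z.1.2 0) ∧ (∀ s, (tσ j z).1.2 (s + 1) = z.1.2 s))
    (τ : MultiProjLim n σ → MultiProjLim n σ)
    (hτ : ∀ z, (∀ s, (τ z).1.1 s = z.1.1 (s + 1)) ∧ (∀ s, (τ z).1.2 s = z.1.2 (s + 1))) :
    (∀ j : Fin n, τ ∘ tσ j = id) ∧
    (∀ (j : Fin n) (z : MultiProjLim n σ), z.1.1 0 = j → tσ j (τ z) = z) ∧
    IsLocalHomeomorph τ := by
  -- left inverse
  have left : ∀ j : Fin n, τ ∘ tσ j = id := by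
    intro j
    funext z
    show τ (tσ j z) = z
    apply multiProjLim_ext
    · intro s
      rw [(hτ _).1 s, (htσ j z).2.1 s]
    · intro s
      rw [(hτ _).2 s, (htσ j z).2.2.2 s]
  -- right inverse on X̃ⱼ
  have right : ∀ (j : Fin n) (z : MultiProjLim n σ), z.1.1 0 = j → tσ j (τ z) = z := by
    intro j z hz
    apply multiProjLim_ext
    · intro s
      cases s with
      | zero => rw [(htσ j (τ z)).1, hz]
      | succ s => rw [(htσ j (τ z)).2.1 s, (hτ z).1 s]
    · intro s
      cases s with
      | zero =>
        rw [(htσ j (τ z)).2.2.1, (hτ z).2 0]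
        have := z.2 0
        rw [hz] at this
        exact this
      | succ s => rw [(htσ j (τ z)).2.2.2 s, (hτ z).2 s]
  refine ⟨left, right, ?_⟩
  -- continuity of τ
  have cτ : Continuous τ := by
    apply continuous_induced_rng.mpr
    have : (Subtype.val ∘ τ) =
        fun z : MultiProjLim n σ => ((fun s => z.1.1 (s + 1)), (fun s => z.1.2 (s + 1))) := by
      funext z
      exact Prod.ext (funext ((hτ z).1)) (funext ((hτ z).2))
    rw [this]
    refine Continuous.prodMk ?_ ?_
    · exact continuous_pi fun s =>
        ((continuous_apply (s + 1)).comp (continuous_fst.comp continuous_subtype_val))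
    · exact continuous_pi fun s =>
        ((continuous_apply (s + 1)).comp (continuous_snd.comp continuous_subtype_val))
  -- continuity of tσ j
  have ctσ : ∀ j, Continuous (tσ j) := by
    intro j
    apply continuous_induced_rng.mpr
    have : (Subtype.val ∘ tσ j) = fun z : MultiProjLim n σ =>
        ((fun s => Nat.rec j (fun s _ => z.1.1 s) s : ℕ → Fin n),
         (fun s => Nat.rec (σ j (z.1.2 0)) (fun s _ => z.1.2 s) s : ℕ → X)) := by
      funext z
      refine Prod.ext (funext fun s => ?_) (funext fun s => ?_)
      · cases s with
        | zero => exact (htσ j z).1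
        | succ s => exact (htσ j z).2.1 s
      · cases s with
        | zero => exact (htσ j z).2.2.1
        | succ s => exact (htσ j z).2.2.2 s
    rw [this]
    refine Continuous.prodMk ?_ ?_
    · refine continuous_pi fun s => ?_
      cases s with
      | zero => exact continuous_const
      | succ s => exact (continuous_apply s).comp (continuous_fst.comp continuous_subtype_val)
    · refine continuous_pi fun s => ?_
      cases s with
      | zero => exact (hσ j).comp ((continuous_apply 0).comp (continuous_snd.comp continuous_subtype_val))
      | succ s => exact (continuous_apply s).comp (continuous_snd.comp continuous_subtype_val)
  intro z
  set j := z.1.1 0 with hj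
  refine ⟨{ toFun := τ
            invFun := tσ j
            source := {w : MultiProjLim n σ | w.1.1 0 = j}
            target := Set.univ
            map_source' := fun _ _ => Set.mem_univ _
            map_target' := fun w _ => (htσ j w).1
            left_inv' := fun w hw => right j w hw
            right_inv' := fun w _ => congrFun (left j) w
            open_source := by
              have : Continuous fun w : MultiProjLim n σ => w.1.1 0 :=
                (continuous_apply 0).comp (continuous_fst.comp continuous_subtype_val)
              exact isOpen_discrete {j} |>.preimage this
            open_target := isOpen_univ
            continuousOn_toFun := cτ.continuousOn
            continuousOn_invFun := (ctσ j).continuousOn }, rfl, rfl⟩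
end

section
/- Let X be a locally compact Hausdorff space and let σ_1, …, σ_n : X → X (n ≥ 1) be continuous proper maps. If there is no nonempty open set U ⊆ X that is (u,v)-wandering for some pair of words (u, v), then each σ_i is surjective. -/
/-- For a word `w = i₁⋯i_k` over `{1,…,n}`, the composition `σ_w = σ_{i₁} ∘ ⋯ ∘ σ_{i_k}`,
with `σ_∅ = id`. -/
abbrev sigmaWord {X : Type*} {n : ℕ} (σ : Fin n → X → X) (w : List (Fin n)) : X → X :=
  w.foldr (fun i g => σ i ∘ g) id

/-- If a multivariable dynamical system has no nonempty open generalized wandering set,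
then each map `σᵢ` is surjective. -/
theorem surjective_of_no_wandering_set {X : Type*} [TopologicalSpace X]
    [LocallyCompactSpace X] [T2Space X] (n : ℕ) (hn : 1 ≤ n) (σ : Fin n → X → X)
    (hσ : ∀ i, Continuous (σ i)) (hproper : ∀ i, IsProperMap (σ i))
    (hnw : ¬ ∃ (u v : List (Fin n)) (U : Set X), IsOpen U ∧ U.Nonempty ∧
      ∀ w : List (Fin n), sigmaWord σ (u ++ w ++ v) ⁻¹' U ∩ U = ∅) :
    ∀ i, Function.Surjective (σ i) := by
  intro i
  by_contra hsurj
  rw [Function.Surjective] at hsurj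
  push_neg at hsurj
  obtain ⟨x, hx⟩ := hsurj
  apply hnw
  refine ⟨[i], [], (Set.range (σ i))ᶜ, ?_, ⟨x, fun ⟨a, ha⟩ => hx a ha⟩, ?_⟩
  · exact ((hproper i).isClosedMap.isClosed_range).isOpen_compl
  · intro w
    ext y
    simp [sigmaWord]
end

section
/- Let X be a second-countable, locally compact, metrizable space and let σ_1, …, σ_n : X → X (n ≥ 1) be continuous proper maps. Then the following are equivalent: (1) there is no nonempty open generalized wandering set; (2) for every pair of words (u, v), the set of (u,v)-recurrent points is dense in X. -/
lemma sigmaWord_continuous {X : Type*} [TopologicalSpace X] {n : ℕ} (σ : Fin n → X → X)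
    (hσ : ∀ i, Continuous (σ i)) (w : List (Fin n)) : Continuous (sigmaWord σ w) := by
  induction w with
  | nil => exact continuous_id
  | cons i t ih => exact (hσ i).comp ih

/-- In a metrizable system, there are no nonempty open generalized wandering sets
if and only if the `(u,v)`-recurrent points are dense for every pair of words `(u,v)`. -/
theorem no_wandering_iff_recurrent_dense {X : Type*} [TopologicalSpace X]
    [SecondCountableTopology X] [LocallyCompactSpace X] [TopologicalSpace.MetrizableSpace X]
    (n : ℕ) (hn : 1 ≤ n) (σ : Fin n → X → X)
    (hσ : ∀ i, Continuous (σ i)) (hproper : ∀ i, IsProperMap (σ i)) :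
    (¬ ∃ (u v : List (Fin n)) (U : Set X), IsOpen U ∧ U.Nonempty ∧
      ∀ w : List (Fin n), sigmaWord σ (u ++ w ++ v) ⁻¹' U ∩ U = ∅) ↔
    (∀ u v : List (Fin n), Dense {x : X | ∀ U : Set X, IsOpen U → x ∈ U →
      ∃ w : List (Fin n), sigmaWord σ (u ++ w ++ v) x ∈ U}) := by
  have : T2Space X := TopologicalSpace.t2Space_of_metrizableSpace
  constructor
  · intro hnw u v
    obtain ⟨S, hScount, -, hSbasis⟩ := TopologicalSpace.exists_countable_basis X
    set E : Set X → Set X := fun B =>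
      (closure B)ᶜ ∪ ⋃ w : List (Fin n), sigmaWord σ (u ++ w ++ v) ⁻¹' B with hE
    have hEo : ∀ B ∈ S, IsOpen (E B) := by
      intro B hB
      exact (isClosed_closure.isOpen_compl).union
        (isOpen_iUnion fun w => (hSbasis.isOpen hB).preimage (sigmaWord_continuous σ hσ _))
    have hEd : ∀ B ∈ S, Dense (E B) := by
      intro B hB
      rw [dense_iff_inter_open]
      intro V hVo hVne
      by_contra hempty
      push_neg at hempty
      have hVsub : V ⊆ closure B := by
        intro x hx
        by_contra hxc
        exact Set.eq_empty_iff_forall_notMem.mp hempty x ⟨hx, Or.inl hxc⟩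
      have hVB : (V ∩ B).Nonempty := by
        obtain ⟨x, hx⟩ := hVne
        have := hVsub hx
        rw [mem_closure_iff] at this
        exact this V hVo hx
      refine hnw ⟨u, v, V ∩ B, hVo.inter (hSbasis.isOpen hB), hVB, fun w => ?_⟩
      rw [Set.eq_empty_iff_forall_notMem]
      rintro x ⟨hx1, hx2, -⟩
      exact Set.eq_empty_iff_forall_notMem.mp hempty x
        ⟨hx2, Or.inr (Set.mem_iUnion.mpr ⟨w, hx1.2⟩)⟩
    have hdense : Dense (⋂ B ∈ S, E B) := dense_biInter_of_isOpen hEo hScount hEd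
    refine hdense.mono ?_
    intro x hx U hU hxU
    obtain ⟨B, hBS, hxB, hBU⟩ := hSbasis.exists_subset_of_mem_open hxU hU
    rcases Set.mem_iInter₂.mp hx B hBS with h | h
    · exact absurd (subset_closure hxB) h
    · obtain ⟨w, hw⟩ := Set.mem_iUnion.mp h
      exact ⟨w, hBU hw⟩
  · rintro hrec ⟨u, v, U, hUo, hUne, hw⟩
    obtain ⟨x, hx, hxU⟩ := (hrec u v).exists_mem_open hUo hUne
    obtain ⟨w, hw'⟩ := hx U hUo hxU
    exact Set.eq_empty_iff_forall_notMem.mp (hw w) x ⟨hw', hxU⟩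
end

section
/- Let X be a second-countable, locally compact, metrizable space and let σ_1, …, σ_n : X → X (n ≥ 1) be continuous proper maps. Then there is no nonempty open generalized wandering set if and only if each σ_i is surjective and, for every word v, the set of (∅, v)-recurrent points is dense in X (where ∅ denotes the empty word). -/
lemma sigmaWord_append {X : Type*} {n : ℕ} (σ : Fin n → X → X) (a b : List (Fin n)) (x : X) :
    sigmaWord σ (a ++ b) x = sigmaWord σ a (sigmaWord σ b x) := by
  induction a with
  | nil => rfl
  | cons i a ih => exact congrArg (σ i) ih

lemma sigmaWord_surjective {X : Type*} {n : ℕ} (σ : Fin n → X → X)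
    (hσ : ∀ i, Function.Surjective (σ i)) (w : List (Fin n)) :
    Function.Surjective (sigmaWord σ w) := by
  induction w with
  | nil => exact Function.surjective_id
  | cons i w ih => exact (hσ i).comp ih

/-- In a metrizable system, there are no nonempty open generalized wandering sets
if and only if each `σᵢ` is surjective and the `(∅,v)`-recurrent points are dense
for every word `v`. -/
theorem no_wandering_iff_surjective_and_recurrent_dense {X : Type*} [TopologicalSpace X]
    [SecondCountableTopology X] [LocallyCompactSpace X] [TopologicalSpace.MetrizableSpace X]
    (n : ℕ) (hn : 1 ≤ n) (σ : Fin n → X → X)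
    (hσ : ∀ i, Continuous (σ i)) (hproper : ∀ i, IsProperMap (σ i)) :
    (¬ ∃ (u v : List (Fin n)) (U : Set X), IsOpen U ∧ U.Nonempty ∧
      ∀ w : List (Fin n), sigmaWord σ (u ++ w ++ v) ⁻¹' U ∩ U = ∅) ↔
    ((∀ i, Function.Surjective (σ i)) ∧
      ∀ v : List (Fin n), Dense {x : X | ∀ U : Set X, IsOpen U → x ∈ U →
        ∃ w : List (Fin n), sigmaWord σ (([] : List (Fin n)) ++ w ++ v) x ∈ U}) := by
  letI : MetricSpace X := TopologicalSpace.metrizableSpaceMetric X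
  constructor
  · intro hnw
    constructor
    · -- surjectivity
      intro i
      by_contra hns
      rw [Function.Surjective] at hns
      push_neg at hns
      obtain ⟨y, hy⟩ := hns
      refine hnw ⟨[i], [], (Set.range (σ i))ᶜ,
        ((hproper i).isClosedMap.isClosed_range).isOpen_compl,
        ⟨y, fun ⟨x, hx⟩ => hy x hx⟩, fun w => ?_⟩
      rw [Set.eq_empty_iff_forall_notMem]
      rintro x ⟨hx1, -⟩
      have he : ([i] ++ w ++ [] : List (Fin n)) = i :: w := by simp
      rw [he] at hx1
      exact hx1 (Set.mem_range_self (sigmaWord σ w x))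
    · -- density of recurrent points
      intro v
      obtain ⟨b, hbc, -, hb⟩ := TopologicalSpace.exists_countable_basis X
      set N : Set X → Set X := fun B =>
        B \ ⋃ w : List (Fin n), sigmaWord σ (w ++ v) ⁻¹' B with hN
      have hkey : ∀ B ∈ b, Dense (closure (N B))ᶜ := by
        intro B hB
        rw [← interior_eq_empty_iff_dense_compl]
        by_contra hne
        have hBo : IsOpen B := hb.isOpen hB
        set W := interior (closure (N B)) with hW
        have hWo : IsOpen W := isOpen_interior
        have hVne : (W ∩ B).Nonempty := by
          obtain ⟨p, hp⟩ := Set.nonempty_iff_ne_empty.2 hne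
          have hpB : p ∈ closure B :=
            closure_mono Set.diff_subset (interior_subset hp)
          obtain ⟨q, hq1, hq2⟩ := mem_closure_iff.1 hpB W hWo hp
          exact ⟨q, hq1, hq2⟩
        refine hnw ⟨[], v, W ∩ B, hWo.inter hBo, hVne, fun w => ?_⟩
        rw [Set.eq_empty_iff_forall_notMem]
        rintro y ⟨hy1, hy2⟩
        -- y ∈ W ∩ B, and sigmaWord σ ([] ++ w ++ v) y ∈ W ∩ B
        have hy1' : sigmaWord σ (w ++ v) y ∈ W ∩ B := hy1
        have hEo : IsOpen ((W ∩ B) ∩ sigmaWord σ (w ++ v) ⁻¹' (W ∩ B)) :=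
          (hWo.inter hBo).inter ((hWo.inter hBo).preimage
            (sigmaWord_continuous σ hσ (w ++ v)))
        have hyW : y ∈ closure (N B) := interior_subset hy2.1
        obtain ⟨z, hz1, hz2⟩ := mem_closure_iff.1 hyW _ hEo ⟨hy2, hy1'⟩
        -- z ∈ N B but sigmaWord σ (w ++ v) z ∈ B
        exact hz2.2 (Set.mem_iUnion.2 ⟨w, hz1.2.2⟩)
      have hdense : Dense (⋂ B ∈ b, (closure (N B))ᶜ) :=
        dense_biInter_of_isOpen (fun B _ => isClosed_closure.isOpen_compl) hbc hkey
      refine hdense.mono ?_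
      intro x hx U hU hxU
      obtain ⟨B, hBb, hxB, hBU⟩ := hb.exists_subset_of_mem_open hxU hU
      have hxN : x ∉ N B :=
        fun h => (Set.mem_iInter₂.1 hx B hBb) (subset_closure h)
      have : x ∈ ⋃ w : List (Fin n), sigmaWord σ (w ++ v) ⁻¹' B := by
        by_contra h
        exact hxN ⟨hxB, h⟩
      obtain ⟨w, hw⟩ := Set.mem_iUnion.1 this
      exact ⟨w, hBU hw⟩
  · -- backward direction
    rintro ⟨hsurj, hdense⟩ ⟨u, v, U, hUo, hUne, hw⟩
    have hVo : IsOpen (sigmaWord σ u ⁻¹' U) :=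
      hUo.preimage (sigmaWord_continuous σ hσ u)
    have hVne : (sigmaWord σ u ⁻¹' U).Nonempty := by
      obtain ⟨y, hy⟩ := hUne
      obtain ⟨x, rfl⟩ := sigmaWord_surjective σ hsurj u y
      exact ⟨x, hy⟩
    obtain ⟨x, hxR, hxV⟩ := (hdense (v ++ u)).exists_mem_open hVo hVne
    obtain ⟨w, hwx⟩ := hxR (sigmaWord σ u ⁻¹' U) hVo hxV
    have hwx' : sigmaWord σ u (sigmaWord σ w (sigmaWord σ v (sigmaWord σ u x))) ∈ U := by
      have h1 : sigmaWord σ (([] : List (Fin n)) ++ w ++ (v ++ u)) x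
          = sigmaWord σ w (sigmaWord σ v (sigmaWord σ u x)) := by
        rw [List.nil_append, sigmaWord_append, sigmaWord_append]
      rw [h1] at hwx
      exact hwx
    have : sigmaWord σ u x ∈ sigmaWord σ (u ++ w ++ v) ⁻¹' U ∩ U := by
      refine ⟨?_, hxV⟩
      show sigmaWord σ (u ++ w ++ v) (sigmaWord σ u x) ∈ U
      rw [sigmaWord_append, sigmaWord_append]
      exact hwx'
    rw [hw w] at this
    exact this
end

section
/- Let X be a topological space, σ_1, …, σ_n : X → X continuous maps, f : X → ℂ a function, and fix 1 ≤ i ≤ n and points x, y ∈ X with σ_i(y) = x. Let H = ℓ²(𝔽_n^+) with standard orthonormal basis (e_w) indexed by words w ∈ 𝔽_n^+. Then there is a linear isometry W : H → H with W e_w = e_{w·i} for all words w (appending the letter i on the right), and W satisfies: (1) for any bounded operators A, B ∈ B(H) with A e_w = f(σ_w(x)) e_w and B e_w = f(σ_w(y)) e_w for all words w, one has W A = B W; and (2) for any bounded operators L, L' ∈ B(H) with L e_w = e_{j·w} and L' e_w = e_{j·w} for all words w (prepending a fixed letter j on the left), one has W L = L' W. -/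
/-- The Fock space `ℓ²(𝔽ₙ⁺)` over the free monoid on `n` generators. -/
abbrev FockSpace (n : ℕ) : Type _ := lp (fun _ : FreeMonoid (Fin n) => ℂ) 2

/-- The standard orthonormal basis vector `e_w` of `ℓ²(𝔽ₙ⁺)`. -/
noncomputable abbrev fockBasis {n : ℕ} (w : FreeMonoid (Fin n)) : FockSpace n :=
  haveI : DecidableEq (FreeMonoid (Fin n)) := Classical.decEq _
  lp.single 2 w 1

/-!
Appending the letter `i` to words induces an isometry `W` of `ℓ²(𝔽ₙ⁺)`, since it maps the
standard basis injectively into itself. Both intertwining relations are then checked on basis vectors: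
`σ_{w·i}(y) = σ_w(σᵢ(y)) = σ_w(x)` gives the first, and associativity `(j·w)·i = j·(w·i)` the
second.
-/

section SigmaWord

variable {X : Type*} {n : ℕ} (σ : Fin n → X → X)

theorem sigmaWord_append_s13 (l m : List (Fin n)) :
    sigmaWord σ (l ++ m) = sigmaWord σ l ∘ sigmaWord σ m := by
  induction l with
  | nil => rfl
  | cons a l ih => simp only [List.cons_append, List.foldr_cons, ih, Function.comp_assoc]

theorem sigmaWord_toList_mul_of (w : FreeMonoid (Fin n)) (i : Fin n) :
    sigmaWord σ (FreeMonoid.toList (w * FreeMonoid.of i)) =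
      sigmaWord σ (FreeMonoid.toList w) ∘ σ i :=
  sigmaWord_append_s13 σ _ [i]

end SigmaWord

namespace FockSpace

variable {n : ℕ}

theorem orthonormal_fockBasis : Orthonormal ℂ (fockBasis (n := n)) := by
  classical
  convert (HilbertBasis.ofRepr (LinearIsometryEquiv.refl ℂ (FockSpace n))).orthonormal
  ext1 w
  rw [← HilbertBasis.repr_symm_single]
  rfl

theorem ext_fockBasis {F : Type*} [AddCommMonoid F] [Module ℂ F] [TopologicalSpace F] [T2Space F]
    {T S : FockSpace n →L[ℂ] F} (h : ∀ w, T (fockBasis w) = S (fockBasis w)) : T = S := by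
  classical
  exact lp.ext_continuousLinearMap ENNReal.ofNat_ne_top fun w =>
    ContinuousLinearMap.ext_ring (h w)

theorem intertwines_of_fockBasis {E : Type*} [NormedAddCommGroup E] [InnerProductSpace ℂ E]
    (W : FockSpace n →ₗᵢ[ℂ] E) (T : FockSpace n →L[ℂ] FockSpace n) (S : E →L[ℂ] E)
    (h : ∀ w, W (T (fockBasis w)) = S (W (fockBasis w))) (ξ : FockSpace n) :
    W (T ξ) = S (W ξ) :=
  congr($(ext_fockBasis (T := W.toContinuousLinearMap ∘L T) (S := S ∘L W.toContinuousLinearMap)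
    h) ξ)

noncomputable def rightCreation (i : Fin n) : FockSpace n →ₗᵢ[ℂ] FockSpace n :=
  (orthonormal_fockBasis.comp _ (mul_left_injective (FreeMonoid.of i))).orthogonalFamily
    |>.linearIsometry

theorem rightCreation_fockBasis (i : Fin n) (w : FreeMonoid (Fin n)) :
    rightCreation i (fockBasis w) = fockBasis (w * FreeMonoid.of i) := by
  classical
  exact ((orthonormal_fockBasis.comp _ (mul_left_injective _)).orthogonalFamily
    |>.linearIsometry_apply_single (i := w) (1 : ℂ)).trans (one_smul ℂ _)

end FockSpace

theorem orbit_representation_restriction_general {X : Type*} {n : ℕ}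
    (σ : Fin n → X → X) (f : X → ℂ) (i : Fin n)
    (x y : X) (hxy : σ i y = x) :
    ∃ W : FockSpace n →ₗᵢ[ℂ] FockSpace n,
      (∀ w : FreeMonoid (Fin n), W (fockBasis w) = fockBasis (w * FreeMonoid.of i)) ∧
      (∀ A B : FockSpace n →L[ℂ] FockSpace n,
        (∀ w : FreeMonoid (Fin n),
          A (fockBasis w) = f (sigmaWord σ (FreeMonoid.toList w) x) • fockBasis w) →
        (∀ w : FreeMonoid (Fin n),
          B (fockBasis w) = f (sigmaWord σ (FreeMonoid.toList w) y) • fockBasis w) →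
        ∀ ξ, W (A ξ) = B (W ξ)) ∧
      (∀ (j : Fin n) (L L' : FockSpace n →L[ℂ] FockSpace n),
        (∀ w : FreeMonoid (Fin n), L (fockBasis w) = fockBasis (FreeMonoid.of j * w)) →
        (∀ w : FreeMonoid (Fin n), L' (fockBasis w) = fockBasis (FreeMonoid.of j * w)) →
        ∀ ξ, W (L ξ) = L' (W ξ)) := by
  refine ⟨FockSpace.rightCreation i, FockSpace.rightCreation_fockBasis i, ?_, ?_⟩
  · intro A B hA hB
    refine FockSpace.intertwines_of_fockBasis _ A B fun w => ?_
    rw [hA, map_smul, FockSpace.rightCreation_fockBasis, hB, sigmaWord_toList_mul_of,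
      Function.comp_apply, hxy]
  · intro j L L' hL hL'
    refine FockSpace.intertwines_of_fockBasis _ L L' fun w => ?_
    simp only [hL, FockSpace.rightCreation_fockBasis, hL', mul_assoc]

/-- If `x = σᵢ(y)`, the orbit representation at `x` is the restriction of the orbit
representation at `y` to an invariant subspace: the right-creation isometry `W` by the
letter `i` intertwines the diagonal operators and the left-creation operators. -/
theorem orbit_representation_restriction {X : Type*} [TopologicalSpace X] {n : ℕ}
    (σ : Fin n → X → X) (hσ : ∀ i, Continuous (σ i)) (f : X → ℂ) (i : Fin n)
    (x y : X) (hxy : σ i y = x) :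
    ∃ W : FockSpace n →ₗᵢ[ℂ] FockSpace n,
      (∀ w : FreeMonoid (Fin n), W (fockBasis w) = fockBasis (w * FreeMonoid.of i)) ∧
      (∀ A B : FockSpace n →L[ℂ] FockSpace n,
        (∀ w : FreeMonoid (Fin n),
          A (fockBasis w) = f (sigmaWord σ (FreeMonoid.toList w) x) • fockBasis w) →
        (∀ w : FreeMonoid (Fin n),
          B (fockBasis w) = f (sigmaWord σ (FreeMonoid.toList w) y) • fockBasis w) →
        ∀ ξ, W (A ξ) = B (W ξ)) ∧
      (∀ (j : Fin n) (L L' : FockSpace n →L[ℂ] FockSpace n),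
        (∀ w : FreeMonoid (Fin n), L (fockBasis w) = fockBasis (FreeMonoid.of j * w)) →
        (∀ w : FreeMonoid (Fin n), L' (fockBasis w) = fockBasis (FreeMonoid.of j * w)) →
        ∀ ξ, W (L ξ) = L' (W ξ)) :=
  orbit_representation_restriction_general σ f i x y hxy
end

section
/- Let X be a locally compact Hausdorff space and σ_1, …, σ_n : X → X (n ≥ 1) continuous proper maps. Let U = X \ (σ_1(X) ∪ ⋯ ∪ σ_n(X)), and form the space X^T = X ⊔ (cl(U) × ℤ_{<0}) (topological disjoint union, where cl(U) carries the subspace topology and ℤ_{<0} = {k ∈ ℤ : k < 0} is discrete). Define σ_i^T : X^T → X^T by σ_i^T(x) = σ_i(x) for x ∈ X, σ_i^T(u, k) = (u, k+1) for k < -1, and σ_i^T(u, -1) = u ∈ X. Then each σ_i^T is continuous and proper, σ_i^T restricted to X equals σ_i, and the extended system is surjective: X^T = σ_1^T(X^T) ∪ ⋯ ∪ σ_n^T(X^T). -/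
/-!
On the tail, `σᵢᵀ` is the homeomorphism `cl(U) × ℤ₋ ≃ cl(U) ⊔ cl(U) × ℤ₋`, which splits off level
`-1` and shifts the other levels up by one, followed by the closed embedding
`cl(U) ⊔ cl(U) × ℤ₋ → X ⊔ cl(U) × ℤ₋`; on `X` it is `σᵢ`. A map out of a disjoint union whose
restrictions to both summands are proper is proper, since it is closed with compact fibres.
For surjectivity, points of `X` missed by every `σᵢ` lie in `U` and are hit from level `-1`, and
each tail point is hit from the level below it.
-/

open Topology

section ProperSum

variable {X Y Z W : Type*} [TopologicalSpace X] [TopologicalSpace Y] [TopologicalSpace Z]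
  [TopologicalSpace W]

theorem IsProperMap.sumElim {f : X → Z} {g : Y → Z} (hf : IsProperMap f) (hg : IsProperMap g) :
    IsProperMap (Sum.elim f g) := by
  rw [isProperMap_iff_isClosedMap_and_compact_fibers]
  refine ⟨hf.continuous.sumElim hg.continuous, hf.isClosedMap.sumElim hg.isClosedMap, fun z => ?_⟩
  have hfiber : Sum.elim f g ⁻¹' {z} = Sum.inl '' (f ⁻¹' {z}) ∪ Sum.inr '' (g ⁻¹' {z}) := by
    ext (x | y) <;> simp
  rw [hfiber]
  exact ((hf.isCompact_preimage isCompact_singleton).image continuous_inl).union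
    ((hg.isCompact_preimage isCompact_singleton).image continuous_inr)

theorem IsProperMap.sumMap {f : X → Z} {g : Y → W} (hf : IsProperMap f) (hg : IsProperMap g) :
    IsProperMap (Sum.map f g) := by
  rw [← Sum.elim_comp_inl_inr (Sum.map f g)]
  exact (IsClosedEmbedding.inl.isProperMap.comp hf).sumElim
    (IsClosedEmbedding.inr.isProperMap.comp hg)

end ProperSum

local notation "ℤ₋" => {k : ℤ // k < 0}

def negIntConsEquiv : Unit ⊕ ℤ₋ ≃ ℤ₋ where
  toFun := Sum.elim (fun _ => ⟨-1, by norm_num⟩) fun k => ⟨k.1 - 1, by omega⟩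
  invFun k := if hk : k.1 = -1 then Sum.inl () else Sum.inr ⟨k.1 + 1, by omega⟩
  left_inv := by
    rintro (_ | ⟨k, hk⟩)
    · simp
    · simp [show k - 1 ≠ -1 by omega]
  right_inv := by
    rintro ⟨k, hk⟩
    by_cases hk1 : k = -1 <;> simp [hk1]

def tailShift (C : Type*) [TopologicalSpace C] : C ⊕ C × ℤ₋ ≃ₜ C × ℤ₋ :=
  (Homeomorph.sumCongr (Homeomorph.prodPUnit C).symm (Homeomorph.refl _)).trans <|
    Homeomorph.prodSumDistrib.symm.trans <|
      (Homeomorph.refl C).prodCongr (Homeomorph.ofDiscrete negIntConsEquiv)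

@[simp] theorem tailShift_inr {C : Type*} [TopologicalSpace C] (u : C) (k : ℤ₋) :
    tailShift C (Sum.inr (u, k)) = (u, ⟨k.1 - 1, by omega⟩) := rfl

structure IsTailExtension {X : Type*} {C : Set X} (f : X → X)
    (F : X ⊕ C × ℤ₋ → X ⊕ C × ℤ₋) : Prop where
  apply_inl : ∀ x, F (Sum.inl x) = Sum.inl (f x)
  apply_inr_of_lt : ∀ u (k : ℤ₋) (hk : k.1 < -1),
    F (Sum.inr (u, k)) = Sum.inr (u, ⟨k.1 + 1, by omega⟩)
  apply_inr_neg_one : ∀ u, F (Sum.inr (u, ⟨-1, by norm_num⟩)) = Sum.inl u.1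

namespace IsTailExtension

variable {X : Type*} {C : Set X} {f : X → X} {F : X ⊕ C × ℤ₋ → X ⊕ C × ℤ₋}

theorem inl_val_mem_range (hF : IsTailExtension f F) (u : C) : Sum.inl u.1 ∈ Set.range F :=
  ⟨_, hF.apply_inr_neg_one u⟩

variable [TopologicalSpace X]

theorem comp_inr (hF : IsTailExtension f F) :
    F ∘ Sum.inr = Sum.map Subtype.val id ∘ (tailShift C).symm := by
  funext p
  obtain ⟨q, rfl⟩ := (tailShift C).surjective p
  simp only [Function.comp_apply, Homeomorph.symm_apply_apply]
  rcases q with u | ⟨u, k⟩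
  · exact hF.apply_inr_neg_one u
  · rw [tailShift_inr, hF.apply_inr_of_lt u _ (by have := k.2; dsimp only; omega)]
    simp

theorem isProperMap (hF : IsTailExtension f F) (hC : IsClosed C) (hf : IsProperMap f) :
    IsProperMap F := by
  rw [← Sum.elim_comp_inl_inr F, hF.comp_inr,
    show F ∘ Sum.inl = Sum.inl ∘ f from funext hF.apply_inl]
  exact (IsClosedEmbedding.inl.isProperMap.comp hf).sumElim
    ((hC.isProperMap_subtypeVal.sumMap isProperMap_id).comp (tailShift C).symm.isProperMap)

theorem inr_mem_range (hF : IsTailExtension f F) (q : C × ℤ₋) : Sum.inr q ∈ Set.range F :=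
  ⟨Sum.inr (tailShift C (Sum.inr q)),
    by simpa using congrFun hF.comp_inr (tailShift C (Sum.inr q))⟩

end IsTailExtension

/-- "Adding a tail" to a non-surjective multivariable dynamical system: the extended maps
`σᵢᵀ` on `Xᵀ = X ⊔ (cl(U) × ℤ₋)` are continuous and proper, extend the `σᵢ`, and make the
system surjective. -/
theorem adding_a_tail {X : Type*} [TopologicalSpace X]
    (n : ℕ) (hn : 1 ≤ n) (σ : Fin n → X → X)
    (hproper : ∀ i, IsProperMap (σ i))
    (σT : Fin n → (X ⊕ ((closure (Set.univ \ ⋃ i, Set.range (σ i)) : Set X) × {k : ℤ // k < 0}))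
      → (X ⊕ ((closure (Set.univ \ ⋃ i, Set.range (σ i)) : Set X) × {k : ℤ // k < 0})))
    (hT1 : ∀ i x, σT i (Sum.inl x) = Sum.inl (σ i x))
    (hT2 : ∀ (i : Fin n) (u : (closure (Set.univ \ ⋃ i, Set.range (σ i)) : Set X))
      (k : {k : ℤ // k < 0}) (hk : k.1 < -1),
      σT i (Sum.inr (u, k)) = Sum.inr (u, ⟨k.1 + 1, by omega⟩))
    (hT3 : ∀ (i : Fin n) (u : (closure (Set.univ \ ⋃ i, Set.range (σ i)) : Set X)),
      σT i (Sum.inr (u, ⟨-1, by norm_num⟩)) = Sum.inl u.1) :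
    (∀ i, Continuous (σT i) ∧ IsProperMap (σT i)) ∧
    (∀ i x, σT i (Sum.inl x) = Sum.inl (σ i x)) ∧
    (⋃ i, Set.range (σT i)) = Set.univ := by
  have hext : ∀ i, IsTailExtension (σ i) (σT i) := fun i => ⟨hT1 i, hT2 i, hT3 i⟩
  have hproperT : ∀ i, IsProperMap (σT i) := fun i =>
    (hext i).isProperMap isClosed_closure (hproper i)
  refine ⟨fun i => ⟨(hproperT i).continuous, hproperT i⟩, hT1, ?_⟩
  let i₀ : Fin n := ⟨0, hn⟩
  refine Set.eq_univ_of_forall fun p => Set.mem_iUnion.2 ?_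
  rcases p with x | q
  · by_cases hx : x ∈ ⋃ i, Set.range (σ i)
    · obtain ⟨i, y, rfl⟩ := Set.mem_iUnion.1 hx
      exact ⟨i, Sum.inl y, hT1 i y⟩
    · exact ⟨i₀, (hext i₀).inl_val_mem_range ⟨x, subset_closure ⟨trivial, hx⟩⟩⟩
  · exact ⟨i₀, (hext i₀).inr_mem_range q⟩
end
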